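/- If Q is a positive query, J is an instance, h is a homomorphism from J to an instance J' that is injective on the active domain of J and the identity on all constants appearing in Q and in a tuple t, then t ∈ Q(J) if and only if h(t) ∈ Q(h(J)); in particular, evaluating a positive query is invariant under renaming nulls of J to fresh distinct constants not occurring in Q or t. -/

import Mathlib

namespace DE

abbrev Var := ℕ

inductive Term (C : Type) where
  | const : C → Term C
  | null : ℕ → Term C

structure Atom (R C : Type) where
  rel : R
  args : List (Var ⊕ C)

structure Fact (R C : Type) where
  rel : R
  args : List (Term C)

abbrev Instance (R C : Type) := Set (Fact R C)

def termOf {C : Type} (h : Var → Term C) : Var ⊕ C → Term C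
  | Sum.inl v => h v
  | Sum.inr c => Term.const c

def applyAtom {R C : Type} (h : Var → Term C) (a : Atom R C) : Fact R C :=
  ⟨a.rel, a.args.map (termOf h)⟩

/-- `h` maps every atom of `as` into the instance `I`. -/
def holdsBody {R C : Type} (I : Instance R C) (h : Var → Term C)
    (as : List (Atom R C)) : Prop :=
  ∀ a ∈ as, applyAtom h a ∈ I

/-- A tuple-generating dependency. -/
structure TGD (R C : Type) where
  body : List (Atom R C)
  head : List (Atom R C)
  frontier : List Var
  exvars : List Var

def varsOf {R C : Type} (as : List (Atom R C)) : Set Var :=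
  {v | ∃ a ∈ as, (Sum.inl v : Var ⊕ C) ∈ a.args}

/-- Well-formedness of a TGD: frontier variables occur in the body, existential
variables do not, and every head variable is a frontier or existential variable. -/
def TGD.wf {R C : Type} (ρ : TGD R C) : Prop :=
  (∀ v ∈ ρ.frontier, v ∈ varsOf ρ.body) ∧
  (∀ z ∈ ρ.exvars, z ∉ varsOf ρ.body) ∧
  (∀ v ∈ varsOf ρ.head, v ∈ ρ.frontier ∨ v ∈ ρ.exvars)

/-- Satisfaction of a TGD by an instance. -/
def satTGD {R C : Type} (I : Instance R C) (ρ : TGD R C) : Prop :=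
  ∀ h : Var → Term C, holdsBody I h ρ.body →
    ∃ h' : Var → Term C, (∀ v ∈ varsOf ρ.body, h' v = h v) ∧ holdsBody I h' ρ.head

/-- An equality-generating dependency. -/
structure EGD (R C : Type) where
  body : List (Atom R C)
  lhs : Var
  rhs : Var

def satEGD {R C : Type} (I : Instance R C) (η : EGD R C) : Prop :=
  ∀ h : Var → Term C, holdsBody I h η.body → h η.lhs = h η.rhs

/-- An ex-choice: given a TGD and a tuple of constants for its frontier,
a constant for each existential variable. -/
abbrev ExChoice (R C : Type) := TGD R C → List C → Var → C

def constHom {C : Type} (h : Var → C) : Var → Term C := fun v => Term.const (h v)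

/-- `I` satisfies all ground versions of the TGD `ρ` that are coherent with `γ`. -/
def satTGDcoh {R C : Type} (I : Instance R C) (γ : ExChoice R C) (ρ : TGD R C) : Prop :=
  ∀ h : Var → C, (∀ z ∈ ρ.exvars, h z = γ ρ (ρ.frontier.map h) z) →
    holdsBody I (constHom h) ρ.body → holdsBody I (constHom h) ρ.head

/-- A data exchange setting: source-to-target TGDs, target TGDs, target EGDs. -/
structure Setting (R C : Type) where
  sigmaST : List (TGD R C)
  sigmaT : List (TGD R C)
  sigmaE : List (EGD R C)

def Setting.wf {R C : Type} (S : Setting R C) : Prop :=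
  ∀ ρ ∈ S.sigmaST ++ S.sigmaT, ρ.wf

/-- Classical solution: `I ∪ J` satisfies `Σst` and `J` satisfies `Σt`. -/
def classicalSolution {R C : Type} (S : Setting R C) (I J : Instance R C) : Prop :=
  J.Finite ∧ (∀ ρ ∈ S.sigmaST, satTGD (I ∪ J) ρ) ∧
    (∀ ρ ∈ S.sigmaT, satTGD J ρ) ∧ (∀ η ∈ S.sigmaE, satEGD J η)

def supportedWith {R C : Type} (S : Setting R C) (γ : ExChoice R C)
    (I J : Instance R C) : Prop :=
  (∀ ρ ∈ S.sigmaST, satTGDcoh (I ∪ J) γ ρ) ∧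
    (∀ ρ ∈ S.sigmaT, satTGDcoh J γ ρ) ∧ (∀ η ∈ S.sigmaE, satEGD J η)

/-- Supported solution: for some ex-choice `γ`, `I ∪ J` satisfies `Σst^γ`,
`J` satisfies `Σt^γ`, and no proper subset of `J` does. -/
def supportedSolution {R C : Type} (S : Setting R C) (I J : Instance R C) : Prop :=
  J.Finite ∧ ∃ γ : ExChoice R C, supportedWith S γ I J ∧
    ∀ J' : Instance R C, J' ⊂ J → ¬ supportedWith S γ I J'

/-- An instance without labeled nulls (a database). -/
def nullFree {R C : Type} (I : Instance R C) : Prop :=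
  ∀ f ∈ I, ∀ t ∈ f.args, ∃ c : C, t = Term.const c

end DE

namespace DE

/-- A conjunctive query with body atoms and a tuple of free variables. -/
structure CQ (R C : Type) where
  body : List (Atom R C)
  free : List Var

def CQ.safe {R C : Type} (q : CQ R C) : Prop := ∀ v ∈ q.free, v ∈ varsOf q.body

def evalCQ {R C : Type} (q : CQ R C) (J : Instance R C) : Set (List (Term C)) :=
  {t | ∃ h : Var → Term C, holdsBody J h q.body ∧ t = q.free.map h}

/-- Output of a union of conjunctive queries (positive query). -/
def evalUCQ {R C : Type} (Q : List (CQ R C)) (J : Instance R C) : Set (List (Term C)) :=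
  {t | ∃ q ∈ Q, t ∈ evalCQ q J}

/-- Classical certain answers. -/
def cert {R C : Type} (S : Setting R C) (I : Instance R C) (Q : List (CQ R C)) :
    Set (List (Term C)) :=
  {t | ∀ J, classicalSolution S I J → t ∈ evalUCQ Q J}

/-- Supported certain answers. -/
def scert {R C : Type} (S : Setting R C) (I : Instance R C) (Q : List (CQ R C)) :
    Set (List (Term C)) :=
  {t | ∀ J, supportedSolution S I J → t ∈ evalUCQ Q J}

end DE

namespace DE

def constsOfAtoms {R C : Type} (as : List (Atom R C)) : Set C :=
  {c | ∃ a ∈ as, (Sum.inr c : Var ⊕ C) ∈ a.args}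

def constsOfTGD {R C : Type} (ρ : TGD R C) : Set C :=
  constsOfAtoms ρ.body ∪ constsOfAtoms ρ.head

def constsOfEGD {R C : Type} (η : EGD R C) : Set C := constsOfAtoms η.body

def constsOfSetting {R C : Type} (S : Setting R C) : Set C :=
  {c | ∃ ρ ∈ S.sigmaST ++ S.sigmaT, c ∈ constsOfTGD ρ} ∪
    {c | ∃ η ∈ S.sigmaE, c ∈ constsOfEGD η}

def constsOfInstance {R C : Type} (I : Instance R C) : Set C :=
  {c | ∃ f ∈ I, Term.const c ∈ f.args}

/-- Replace each labeled null by a constant according to `r`. -/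
def renameTerm {C : Type} (r : ℕ → C) : Term C → Term C
  | Term.null n => Term.const (r n)
  | Term.const c => Term.const c

def renameFact {R C : Type} (r : ℕ → C) (f : Fact R C) : Fact R C :=
  ⟨f.rel, f.args.map (renameTerm r)⟩

/-- Active domain of an instance. -/
def adom {R C : Type} (J : Instance R C) : Set (Term C) := {t | ∃ f ∈ J, t ∈ f.args}

def mapFact {R C : Type} (h : Term C → Term C) (f : Fact R C) : Fact R C :=
  ⟨f.rel, f.args.map h⟩

end DE

/-!
A match of a query body in `J`, composed with `h`, is a match in `h(J)` because `h` fixes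
the constants of the query. Conversely, a match in `h(J)` sends every body variable into
`h(adom J)` and can be pulled back along a partial inverse of `h` on `adom J`; as `h` is
injective on `adom J` together with all constants, each pulled-back atom is exactly the
fact of `J` it was sent onto, and the answer tuple, made of constants, is recovered too.
-/

theorem Set.InjOn.list_map {α β : Type*} {f : α → β} {s : Set α} (hf : Set.InjOn f s) :
    Set.InjOn (List.map f) {l | ∀ x ∈ l, x ∈ s}
  | [], _, _, _, he => (List.map_eq_nil_iff.mp he.symm).symm
  | _ :: _, _, [], _, he => absurd he (List.cons_ne_nil _ _)
  | a :: l₁, h₁, b :: l₂, h₂, he => by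
    obtain ⟨ha, hl₁⟩ := List.forall_mem_cons.mp h₁
    obtain ⟨hb, hl₂⟩ := List.forall_mem_cons.mp h₂
    obtain ⟨hab, hl⟩ := List.cons_eq_cons.mp he
    rw [hf ha hb hab, hf.list_map hl₁ hl₂ hl]

namespace DE

variable {R C : Type}

instance : Nonempty (Term C) := ⟨Term.null 0⟩

theorem applyAtom_congr {g₁ g₂ : Var → Term C} {a : Atom R C}
    (hg : ∀ v, (Sum.inl v : Var ⊕ C) ∈ a.args → g₁ v = g₂ v) :
    applyAtom g₁ a = applyAtom g₂ a := by
  simp only [applyAtom, Fact.mk.injEq, true_and]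
  refine List.map_congr_left ?_
  rintro (v | c) hx
  exacts [hg v hx, rfl]

theorem mapFact_injOn {h : Term C → Term C} {D : Set (Term C)} (hinj : Set.InjOn h D) :
    Set.InjOn (mapFact h : Fact R C → Fact R C) {f | ∀ x ∈ f.args, x ∈ D} := by
  rintro ⟨r₁, l₁⟩ h₁ ⟨r₂, l₂⟩ h₂ he
  obtain ⟨hr, hl⟩ := Fact.mk.inj he
  exact congrArg₂ Fact.mk hr (hinj.list_map h₁ h₂ hl)

theorem exists_mem_adom_of_holdsBody_image {h : Term C → Term C} {J : Instance R C}
    {g : Var → Term C} {as : List (Atom R C)} (hJ : holdsBody (mapFact h '' J) g as)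
    {v : Var} (hv : v ∈ varsOf as) : ∃ s ∈ adom J, h s = g v := by
  obtain ⟨a, ha, hva⟩ := hv
  obtain ⟨f, hf, hfa⟩ := hJ a ha
  have hmem : g v ∈ (mapFact h f).args := hfa ▸ List.mem_map_of_mem hva
  obtain ⟨s, hs, hsv⟩ := List.mem_map.mp hmem
  exact ⟨s, ⟨f, hf, hs⟩, hsv⟩

section Homomorphism

variable {h : Term C → Term C} (hconst : ∀ c : C, h (Term.const c) = Term.const c)
include hconst

theorem mapFact_applyAtom (g : Var → Term C) (a : Atom R C) :
    mapFact h (applyAtom g a) = applyAtom (h ∘ g) a := by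
  simp only [mapFact, applyAtom, List.map_map, Fact.mk.injEq, true_and]
  refine List.map_congr_left ?_
  rintro (v | c) -
  exacts [rfl, hconst c]

theorem holdsBody.image {J : Instance R C} {g : Var → Term C} {as : List (Atom R C)}
    (hJ : holdsBody J g as) : holdsBody (mapFact h '' J) (h ∘ g) as :=
  fun a ha => ⟨applyAtom g a, hJ a ha, mapFact_applyAtom hconst g a⟩

theorem map_mem_evalCQ_image {q : CQ R C} {J : Instance R C} {t : List (Term C)}
    (ht : t ∈ evalCQ q J) : t.map h ∈ evalCQ q (mapFact h '' J) := by
  obtain ⟨g, hg, rfl⟩ := ht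
  exact ⟨h ∘ g, hg.image hconst, List.map_map⟩

theorem holdsBody_of_holdsBody_image {J : Instance R C}
    (hinj : Set.InjOn h (adom J ∪ Set.range Term.const)) {g : Var → Term C}
    {as : List (Atom R C)} (hJ : holdsBody (mapFact h '' J) g as) :
    holdsBody J (Function.invFunOn h (adom J) ∘ g) as := by
  intro a ha
  obtain ⟨f, hf, hfa⟩ := hJ a ha
  have hpre : ∀ v, (Sum.inl v : Var ⊕ C) ∈ a.args →
      Function.invFunOn h (adom J) (g v) ∈ adom J ∧ h (Function.invFunOn h (adom J) (g v)) = g v :=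
    fun v hv => Function.invFunOn_pos (exists_mem_adom_of_holdsBody_image hJ ⟨a, ha, hv⟩)
  suffices applyAtom (Function.invFunOn h (adom J) ∘ g) a = f from this ▸ hf
  refine mapFact_injOn hinj ?_ (fun x hx => Or.inl ⟨f, hf, hx⟩) ?_
  · rintro _ hx
    obtain ⟨v | c, hy, rfl⟩ := List.mem_map.mp hx
    exacts [Or.inl (hpre v hy).1, Or.inr ⟨c, rfl⟩]
  · rw [mapFact_applyAtom hconst, hfa]
    exact applyAtom_congr fun v hv => (hpre v hv).2

theorem mem_evalCQ_of_map_mem_evalCQ_image {q : CQ R C} (hq : q.safe) {J : Instance R C}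
    (hinj : Set.InjOn h (adom J ∪ Set.range Term.const)) {t : List (Term C)}
    (ht : ∀ x ∈ t, x ∈ adom J ∪ Set.range Term.const)
    (hmem : t.map h ∈ evalCQ q (mapFact h '' J)) : t ∈ evalCQ q J := by
  obtain ⟨g, hg, hgt⟩ := hmem
  have hpre (v : Var) (hv : v ∈ q.free) :=
    exists_mem_adom_of_holdsBody_image hg (hq v hv)
  refine ⟨_, holdsBody_of_holdsBody_image hconst hinj hg, hinj.list_map ht ?_ ?_⟩
  · rintro _ hx
    obtain ⟨v, hv, rfl⟩ := List.mem_map.mp hx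
    exact Or.inl (Function.invFunOn_mem (hpre v hv))
  · rw [hgt, List.map_map]
    exact List.map_congr_left fun v hv => (Function.invFunOn_eq (hpre v hv)).symm

end Homomorphism

end DE

/-- evaluation of a positive query is invariant under a
homomorphism that is the identity on constants and injective on the active
domain (in particular, under renaming nulls to fresh distinct constants). -/
theorem positive_query_hom_invariant {R C : Type} (Q : List (DE.CQ R C))
    (hQ : ∀ q ∈ Q, q.safe) (J : DE.Instance R C)
    (h : DE.Term C → DE.Term C)
    (hconst : ∀ c : C, h (DE.Term.const c) = DE.Term.const c)
    (hinj : Set.InjOn h (DE.adom J ∪ Set.range (DE.Term.const : C → DE.Term C)))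
    (t : List C) :
    t.map DE.Term.const ∈ DE.evalUCQ Q J ↔
      (t.map DE.Term.const).map h ∈ DE.evalUCQ Q (DE.mapFact h '' J) := by
  have ht : ∀ x ∈ t.map DE.Term.const, x ∈ DE.adom J ∪ Set.range DE.Term.const := by
    intro x hx
    obtain ⟨c, -, rfl⟩ := List.mem_map.mp hx
    exact Or.inr ⟨c, rfl⟩
  constructor
  · rintro ⟨q, hq, hmem⟩
    exact ⟨q, hq, DE.map_mem_evalCQ_image hconst hmem⟩
  · rintro ⟨q, hq, hmem⟩
    exact ⟨q, hq, DE.mem_evalCQ_of_map_mem_evalCQ_image hconst (hQ q hq) hinj ht hmem⟩
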